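/- arXiv:2502.00134 — 12 statements merged into one kernel-verified Lean document; each statement's English description precedes it below -/
import Mathlib

section
/- For every positive integer n, the integer {2}-domination number of the path graph P_n equals 2⌈n/3⌉. -/
open SimpleGraph Finset
open scoped Classical

/-- Sum of `f` over the closed neighborhood of `v`. -/
noncomputable def nbhdSum {V : Type*} [Fintype V] (G : SimpleGraph V) (f : V → ℕ) (v : V) : ℕ :=
  ∑ u ∈ Finset.univ.filter (fun u => G.Adj v u ∨ u = v), f u

/-- `f` is an integer `{2}`-dominating function of `G`. -/
def IsTwoDomFn {V : Type*} [Fintype V] (G : SimpleGraph V) (f : V → ℕ) : Prop :=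
  ∀ v, 2 ≤ nbhdSum G f v

/-- The integer `{2}`-domination number of `G`. -/
noncomputable def gamma2 {V : Type*} [Fintype V] (G : SimpleGraph V) : ℕ :=
  sInf {w | ∃ f, IsTwoDomFn G f ∧ w = ∑ v, f v}

/-- neighborhood-sum formula on ℕ. -/
def nform (n : ℕ) (g : ℕ → ℕ) (v : ℕ) : ℕ :=
  (if 1 ≤ v then g (v-1) else 0) + g v + (if v+1 < n then g (v+1) else 0)

lemma sifsum_eq (n v : ℕ) (g : ℕ → ℕ) (hv : v < n) :
    ∑ i ∈ range n, (if (v+1 = i ∨ i+1 = v ∨ i = v) then g i else 0) = nform n g v := by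
  have hpt : ∀ i ∈ range n, (if (v+1 = i ∨ i+1 = v ∨ i = v) then g i else 0)
      = ((if i = v-1 ∧ 1 ≤ v then g i else 0) + (if i = v then g i else 0))
        + (if i = v+1 then g i else 0) := by
    intro i _
    split_ifs with h h1 h2 h3 h1 h2 h3 <;> omega
  rw [Finset.sum_congr rfl hpt, Finset.sum_add_distrib, Finset.sum_add_distrib]
  have h2 : ∑ i ∈ range n, (if i = v then g i else 0) = g v := by
    rw [Finset.sum_ite_eq' (range n) v g]
    simp [Finset.mem_range.mpr hv]
  have h3 : ∑ i ∈ range n, (if i = v+1 then g i else 0)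
      = (if v+1 < n then g (v+1) else 0) := by
    rw [Finset.sum_ite_eq' (range n) (v+1) g]
    simp [Finset.mem_range]
  have h1 : ∑ i ∈ range n, (if i = v-1 ∧ 1 ≤ v then g i else 0)
      = (if 1 ≤ v then g (v-1) else 0) := by
    by_cases hv1 : 1 ≤ v
    · simp only [hv1, and_true, if_true]
      rw [Finset.sum_ite_eq' (range n) (v-1) g]
      simp [Finset.mem_range.mpr (by omega : v - 1 < n)]
    · simp [hv1]
  rw [h1, h2, h3, nform]

lemma bridge (n : ℕ) (f : Fin n → ℕ) (v : Fin n) :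
    nbhdSum (pathGraph n) f v
      = nform n (fun i => if h : i < n then f ⟨i, h⟩ else 0) v.val := by
  classical
  set g : ℕ → ℕ := fun i => if h : i < n then f ⟨i, h⟩ else 0 with hg
  rw [nbhdSum, Finset.sum_filter,
    ← sifsum_eq n v.val g v.isLt,
    ← Fin.sum_univ_eq_sum_range (fun i => if (v.val+1 = i ∨ i+1 = v.val ∨ i = v.val) then g i else 0) n]
  apply Finset.sum_congr rfl
  intro u _
  have hgu : g u.val = f u := by simp [hg, u.isLt]
  simp only [pathGraph_adj, Fin.ext_iff, or_assoc, hgu]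

lemma key : ∀ n : ℕ, ∀ g : ℕ → ℕ, (∀ v < n, 2 ≤ nform n g v) →
    2 * ((n+2)/3) ≤ ∑ i ∈ range n, g i := by
  intro n
  induction n using Nat.strong_induction_on with
  | _ n ih =>
    intro g h
    rcases Nat.eq_zero_or_pos n with h0 | h0
    · simp [h0]
    by_cases h3 : n ≤ 3
    · have h0' := h 0 h0
      have hle : nform n g 0 ≤ ∑ i ∈ range n, g i := by
        unfold nform
        interval_cases n <;> simp [Finset.sum_range_succ] <;> omega
      have : (n+2)/3 = 1 := by omega
      omega
    · -- n ≥ 4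
      obtain ⟨k, rfl⟩ : ∃ k, n = k + 4 := ⟨n - 4, by omega⟩
      set g' : ℕ → ℕ := fun i => if i = k then g k + g (k+1) else g i with hg'
      have hgle : ∀ i, g i ≤ g' i := by
        intro i; simp only [hg']; split_ifs with hi
        · subst hi; omega
        · exact le_refl _
      have h' : ∀ v < k + 1, 2 ≤ nform (k+1) g' v := by
        intro v hv
        by_cases hvm : v = k
        · subst hvm
          have hv2 := h v (by omega)
          unfold nform at hv2 ⊢
          have e1 : g' v = g v + g (v+1) := by simp [hg']
          rw [if_neg (by omega : ¬ (v + 1 < v + 1)), e1]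
          rw [if_pos (by omega : v + 1 < v + 4)] at hv2
          by_cases hm2 : 1 ≤ v
          · have e3 : g' (v-1) = g (v-1) := by
              simp only [hg']; rw [if_neg (by omega)]
            rw [if_pos hm2] at hv2 ⊢
            rw [e3]; omega
          · rw [if_neg hm2] at hv2 ⊢; omega
        · have hv2 := h v (by omega)
          unfold nform at hv2 ⊢
          rw [if_pos (by omega : v + 1 < k + 1)]
          rw [if_pos (by omega : v + 1 < k + 4)] at hv2
          have b1 := hgle (v-1)
          have b2 := hgle v
          have b3 := hgle (v+1)
          split_ifs at hv2 ⊢ <;> omega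
      have IH := ih (k+1) (by omega) g' h'
      have hs1 : ∑ i ∈ range (k+1), g' i = (∑ i ∈ range k, g i) + g k + g (k+1) := by
        rw [Finset.sum_range_succ]
        have hcg : ∀ i ∈ range k, g' i = g i := by
          intro i hi
          simp only [hg']; rw [if_neg (by simp at hi; omega)]
        rw [Finset.sum_congr rfl hcg]
        simp only [hg', if_pos rfl]
        simp [add_assoc]
      have hs2 : ∑ i ∈ range (k+4), g i
          = (∑ i ∈ range k, g i) + g k + g (k+1) + g (k+2) + g (k+3) := by
        rw [Finset.sum_range_succ, Finset.sum_range_succ, Finset.sum_range_succ,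
          Finset.sum_range_succ]
      have hlast := h (k+3) (by omega)
      unfold nform at hlast
      rw [if_pos (by omega : 1 ≤ k+3), if_neg (by omega : ¬ (k+3+1 < k+4))] at hlast
      have e4 : k + 3 - 1 = k + 2 := by omega
      rw [e4] at hlast
      omega

/-- the witness pattern -/
def pat (n : ℕ) : ℕ → ℕ := fun i => if i % 3 = 1 ∨ (n % 3 = 1 ∧ i = n - 1) then 2 else 0

lemma pat_sum (n : ℕ) (hn : 0 < n) : ∑ i ∈ range n, pat n i = 2 * ((n+2)/3) := by
  have hsplit : ∀ i ∈ range n, pat n i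
      = (if i % 3 = 1 then 2 else 0) + (if i = n - 1 ∧ n % 3 = 1 then 2 else 0) := by
    intro i hi
    simp only [Finset.mem_range] at hi
    unfold pat
    split_ifs <;> omega
  rw [Finset.sum_congr rfl hsplit, Finset.sum_add_distrib]
  have h1 : ∀ m : ℕ, ∑ i ∈ range m, (if i % 3 = 1 then 2 else 0) = 2 * ((m+1)/3) := by
    intro m
    induction m with
    | zero => simp
    | succ m ihm =>
        rw [Finset.sum_range_succ, ihm]
        by_cases hm : m % 3 = 1 <;> simp [hm] <;> omega
  have h2 : ∑ i ∈ range n, (if i = n - 1 ∧ n % 3 = 1 then 2 else 0)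
      = if n % 3 = 1 then 2 else 0 := by
    by_cases hn3 : n % 3 = 1
    · simp only [hn3, and_true]
      rw [Finset.sum_ite_eq' (range n) (n-1) (fun _ => 2)]
      simp [Finset.mem_range.mpr (by omega : n - 1 < n)]
    · simp [hn3]
  rw [h1, h2]
  by_cases hn3 : n % 3 = 1 <;> simp [hn3] <;> omega

lemma pat_dom (n : ℕ) (v : ℕ) (hv : v < n) : 2 ≤ nform n (pat n) v := by
  unfold nform pat
  rcases (by omega : v % 3 = 0 ∨ v % 3 = 1 ∨ v % 3 = 2) with h | h | h
  · by_cases hvn : v + 1 < n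
    · rw [if_pos hvn, if_pos (by omega : (v+1) % 3 = 1 ∨ (n % 3 = 1 ∧ v + 1 = n - 1))]
      omega
    · rw [if_pos (by omega : v % 3 = 1 ∨ (n % 3 = 1 ∧ v = n - 1))]
      omega
  · rw [if_pos (by omega : v % 3 = 1 ∨ (n % 3 = 1 ∧ v = n - 1))]
    omega
  · rw [if_pos (by omega : 1 ≤ v),
      if_pos (by omega : (v-1) % 3 = 1 ∨ (n % 3 = 1 ∧ v - 1 = n - 1))]
    omega

lemma ceil_third (n : ℕ) : ⌈(n : ℚ) / 3⌉₊ = (n + 2) / 3 := by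
  rcases Nat.eq_zero_or_pos n with h0 | h0
  · simp [h0]
  rw [Nat.ceil_eq_iff (by omega : (n+2)/3 ≠ 0)]
  constructor
  · rw [lt_div_iff₀ (by norm_num : (0:ℚ) < 3)]
    have h : ((n+2)/3 - 1) * 3 < n := by omega
    exact_mod_cast h
  · rw [div_le_iff₀ (by norm_num : (0:ℚ) < 3)]
    have h : n ≤ (n+2)/3 * 3 := by omega
    exact_mod_cast h

theorem stmt_0 (n : ℕ) (hn : 0 < n) :
    gamma2 (pathGraph n) = 2 * ⌈(n : ℚ) / 3⌉₊ := by
  rw [ceil_third]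
  -- the pattern as a function on Fin n
  set F : Fin n → ℕ := fun v => pat n v.val with hF
  have hgF : (fun i => if h : i < n then F ⟨i, h⟩ else 0) = fun i => if i < n then pat n i else 0 := by
    funext i; split_ifs with h <;> rfl
  have hFdom : IsTwoDomFn (pathGraph n) F := by
    intro v
    rw [bridge, hgF]
    have : ∀ w, w < n → nform n (fun i => if i < n then pat n i else 0) w = nform n (pat n) w := by
      intro w hw
      unfold nform
      split_ifs with h1 h2 h2 <;>
        simp_all [if_pos, (by omega : w - 1 < n), (by omega : w < n)] <;> omega
    rw [this v.val v.isLt]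
    exact pat_dom n v.val v.isLt
  have hFsum : ∑ v, F v = 2 * ((n+2)/3) := by
    rw [hF, Fin.sum_univ_eq_sum_range (fun i => pat n i) n, pat_sum n hn]
  apply le_antisymm
  · exact Nat.sInf_le ⟨F, hFdom, hFsum.symm⟩
  · refine le_csInf ⟨2 * ((n+2)/3), F, hFdom, hFsum.symm⟩ ?_
    rintro w ⟨f, hf, rfl⟩
    set g : ℕ → ℕ := fun i => if h : i < n then f ⟨i, h⟩ else 0 with hg
    have hdom : ∀ v < n, 2 ≤ nform n g v := by
      intro v hv
      have := hf ⟨v, hv⟩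
      rwa [bridge] at this
    have := key n g hdom
    rwa [← Fin.sum_univ_eq_sum_range (fun i => if h : i < n then f ⟨i, h⟩ else 0) n,
      (by funext u; simp [u.isLt] : (fun i : Fin n => if h : i.val < n then f ⟨i.val, h⟩ else 0) = f)] at this
end

section
/- For every positive integer n, the integer {2}-domination number of the path graph P_n is at most 2⌈n/3⌉. -/
open SimpleGraph Finset
open scoped Classical

private lemma base_sum (n : ℕ) :
    (∑ i ∈ Finset.range n, (if i % 3 = 1 then 2 else 0)) = 2 * ((n + 1) / 3) := by
  induction n with
  | zero => simp
  | succ n ih =>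
    rw [Finset.sum_range_succ, ih]
    by_cases h : n % 3 = 1 <;> simp [h] <;> omega

theorem stmt_1 (n : ℕ) (hn : 0 < n) :
    gamma2 (pathGraph n) ≤ 2 * ⌈(n : ℚ) / 3⌉₊ := by
  set f : Fin n → ℕ := fun v =>
    (if v.val % 3 = 1 then 2 else 0) + (if n % 3 = 1 ∧ v.val = n - 1 then 2 else 0) with hf
  have hdom : IsTwoDomFn (pathGraph n) f := by
    intro v
    -- find a vertex u in closed nbhd with f u ≥ 2
    have key : ∃ u : Fin n, ((pathGraph n).Adj v u ∨ u = v) ∧ 2 ≤ f u := by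
      rcases (show v.val % 3 = 0 ∨ v.val % 3 = 1 ∨ v.val % 3 = 2 by omega) with h | h | h
      · by_cases hlast : v.val = n - 1
        · -- then n % 3 = 1
          have hn3 : n % 3 = 1 := by have := v.isLt; omega
          exact ⟨v, Or.inr rfl, by simp [hf, hn3, hlast]⟩
        · have hlt : v.val + 1 < n := by have := v.isLt; omega
          refine ⟨⟨v.val + 1, hlt⟩, Or.inl ?_, ?_⟩
          · rw [pathGraph_adj]; left; rfl
          · simp only [hf]
            have : (v.val + 1) % 3 = 1 := by omega
            simp [this]
      · exact ⟨v, Or.inr rfl, by simp [hf, h]⟩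
      · have hpos : 0 < v.val := by omega
        refine ⟨⟨v.val - 1, by have := v.isLt; omega⟩, Or.inl ?_, ?_⟩
        · rw [pathGraph_adj]; right; simp; omega
        · simp only [hf]
          have : (v.val - 1) % 3 = 1 := by omega
          simp [this]
    obtain ⟨u, hu, hfu⟩ := key
    calc 2 ≤ f u := hfu
    _ ≤ nbhdSum (pathGraph n) f v :=
      Finset.single_le_sum (f := f) (fun i _ => Nat.zero_le _)
        (by simp only [Finset.mem_filter]; exact ⟨Finset.mem_univ _, hu⟩)
  have hsum : (∑ v, f v) ≤ 2 * ⌈(n : ℚ) / 3⌉₊ := by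
    have hceil : n ≤ 3 * ⌈(n : ℚ) / 3⌉₊ := by
      have h1 := Nat.le_ceil ((n : ℚ) / 3)
      rw [div_le_iff₀ (by norm_num)] at h1
      have h2' : n ≤ ⌈(n : ℚ) / 3⌉₊ * 3 := by exact_mod_cast h1
      omega
    have h2 : (∑ v, f v) = 2 * ((n + 1) / 3) + (if n % 3 = 1 then 2 else 0) := by
      rw [show (∑ v, f v) = ∑ i ∈ Finset.range n,
            ((if i % 3 = 1 then 2 else 0) + (if n % 3 = 1 ∧ i = n - 1 then 2 else 0)) from
          Fin.sum_univ_eq_sum_range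
            (fun i => (if i % 3 = 1 then 2 else 0) + (if n % 3 = 1 ∧ i = n - 1 then 2 else 0)) n,
        Finset.sum_add_distrib, base_sum]
      congr 1
      by_cases h : n % 3 = 1
      · simp only [h, true_and]
        rw [Finset.sum_ite_eq' (Finset.range n) (n - 1) (fun _ => 2)]
        simp [Finset.mem_range.mpr (by omega : n - 1 < n), h]
      · simp [h]
    rw [h2]
    by_cases h : n % 3 = 1 <;> simp [h] <;> omega
  calc gamma2 (pathGraph n) ≤ ∑ v, f v :=
        Nat.sInf_le ⟨f, hdom, rfl⟩
    _ ≤ _ := hsum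
end

section
/- For every positive integer n, the integer {2}-domination number of the path graph P_n is at least 2⌈n/3⌉. -/
open SimpleGraph Finset
open scoped Classical

/-- The purely arithmetic core: if `F` vanishes from `n` on and every window
`[k-1, k+1]` with `k < n` has weight at least 2, then the total weight is at
least `2 * ⌈n/3⌉`. -/
lemma key_lemma : ∀ (n : ℕ), ∀ (F : ℕ → ℕ), (∀ j, n ≤ j → F j = 0) →
    (∀ k, k < n → 2 ≤ ∑ j ∈ Finset.Ico (k - 1) (k + 2), F j) →
    2 * ((n + 2) / 3) ≤ ∑ j ∈ Finset.range n, F j := by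
  intro n
  induction n using Nat.strong_induction_on with
  | _ n IH =>
    intro F hF0 hFdom
    match n, IH with
    | 0, _ => simp
    | 1, _ =>
      have h := hFdom 0 one_pos
      have h1 : F 1 = 0 := hF0 1 le_rfl
      rw [show Finset.Ico (0 - 1) (0 + 2) = Finset.range 2 by rfl] at h
      simp [Finset.sum_range_succ] at h ⊢
      omega
    | 2, _ =>
      have h := hFdom 1 one_lt_two
      have h2 : F 2 = 0 := hF0 2 le_rfl
      rw [show Finset.Ico (1 - 1) (1 + 2) = Finset.range 3 by rfl] at h
      simp [Finset.sum_range_succ] at h ⊢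
      omega
    | 3, _ =>
      have h := hFdom 2 (by norm_num)
      have h3 : F 3 = 0 := hF0 3 le_rfl
      rw [show (2 : ℕ) - 1 = 1 by rfl, show (2 : ℕ) + 2 = 4 by rfl] at h
      rw [Finset.sum_Ico_succ_top (by norm_num), Finset.sum_Ico_succ_top (by norm_num),
        Finset.sum_Ico_succ_top (by norm_num)] at h
      simp [Finset.sum_range_succ] at h ⊢
      omega
    | (a + 4), IH =>
      -- n = (a + 1) + 3 ; remove the last three vertices
      set G : ℕ → ℕ := fun j =>
        if j < a then F j else if j = a then F a + F (a + 1) else 0 with hG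
      have hGaEq : G a = F a + F (a + 1) := by simp [hG]
      have hGlt : ∀ j, j < a → G j = F j := by
        intro j hj; simp [hG, hj]
      have hG0 : ∀ j, a + 1 ≤ j → G j = 0 := by
        intro j hj
        simp only [hG]
        rw [if_neg (by omega), if_neg (by omega)]
      have hGdom : ∀ k, k < a + 1 → 2 ≤ ∑ j ∈ Finset.Ico (k - 1) (k + 2), G j := by
        intro k hk
        rcases eq_or_lt_of_le (Nat.lt_iff_add_one_le.mp hk) with hke | hklt
        · -- k = a
          have hka : k = a := by omega
          subst hka
          have hF := hFdom k (by omega)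
          have e1 : ∀ (H : ℕ → ℕ), ∑ j ∈ Finset.Ico (k - 1) (k + 2), H j
              = ∑ j ∈ Finset.Ico (k - 1) k, H j + H k + H (k + 1) := by
            intro H
            rw [show k + 2 = (k + 1) + 1 by rfl,
              Finset.sum_Ico_succ_top (by omega),
              Finset.sum_Ico_succ_top (by omega)]
          rw [e1] at hF ⊢
          have e2 : ∑ j ∈ Finset.Ico (k - 1) k, G j
              = ∑ j ∈ Finset.Ico (k - 1) k, F j := by
            apply Finset.sum_congr rfl
            intro j hj
            simp only [Finset.mem_Ico] at hj
            exact hGlt j hj.2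
          have e4 : G (k + 1) = 0 := hG0 (k + 1) le_rfl
          omega
        · -- k < a
          have hF := hFdom k (by omega)
          refine le_trans hF (Finset.sum_le_sum ?_)
          intro j hj
          simp only [Finset.mem_Ico] at hj
          rcases lt_or_eq_of_le (show j ≤ a by omega) with h' | h'
          · rw [hGlt j h']
          · subst h'
            rw [hGaEq]; omega
      have hIH := IH (a + 1) (by omega) G hG0 hGdom
      have hGsum : ∑ j ∈ Finset.range (a + 1), G j = ∑ j ∈ Finset.range (a + 2), F j := by
        rw [Finset.sum_range_succ, Finset.sum_range_succ, Finset.sum_range_succ, hGaEq]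
        have e2 : ∑ j ∈ Finset.range a, G j = ∑ j ∈ Finset.range a, F j := by
          apply Finset.sum_congr rfl
          intro j hj
          exact hGlt j (Finset.mem_range.mp hj)
        omega
      have hlast : 2 ≤ F (a + 2) + F (a + 3) := by
        have hF := hFdom (a + 3) (by omega)
        rw [show a + 3 - 1 = a + 2 by omega, show a + 3 + 2 = a + 5 by omega,
          show a + 5 = (a + 4) + 1 by omega,
          Finset.sum_Ico_succ_top (by omega), Finset.sum_Ico_succ_top (by omega),
          Finset.sum_Ico_succ_top (by omega), Finset.Ico_self, Finset.sum_empty] at hF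
        have := hF0 (a + 4) (by omega)
        omega
      have hsplit : ∑ j ∈ Finset.range (a + 4), F j
          = ∑ j ∈ Finset.range (a + 2), F j + F (a + 2) + F (a + 3) := by
        rw [show a + 4 = (a + 3) + 1 by rfl, Finset.sum_range_succ,
          show a + 3 = (a + 2) + 1 by rfl, Finset.sum_range_succ]
      have hb : 2 * ((a + 4 + 2) / 3) = 2 * ((a + 1 + 2) / 3) + 2 := by omega
      omega

theorem stmt_2 (n : ℕ) (hn : 0 < n) :
    2 * ⌈(n : ℚ) / 3⌉₊ ≤ gamma2 (pathGraph n) := by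
  have hceil : ⌈(n : ℚ) / 3⌉₊ ≤ (n + 2) / 3 := by
    rw [Nat.ceil_le, div_le_iff₀ (by norm_num)]
    have h : n ≤ ((n + 2) / 3) * 3 := by omega
    exact_mod_cast h
  have hmain : ∀ f : Fin n → ℕ, IsTwoDomFn (pathGraph n) f →
      2 * ((n + 2) / 3) ≤ ∑ v, f v := by
    intro f hf
    set F : ℕ → ℕ := fun j => if h : j < n then f ⟨j, h⟩ else 0 with hFdef
    have hF0 : ∀ j, n ≤ j → F j = 0 := by
      intro j hj; simp only [hFdef]; rw [dif_neg (by omega)]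
    have hFdom : ∀ k, k < n → 2 ≤ ∑ j ∈ Finset.Ico (k - 1) (k + 2), F j := by
      intro k hk
      have h := hf ⟨k, hk⟩
      unfold nbhdSum at h
      refine le_trans h (le_of_eq ?_)
      have e3 : ∑ u : Fin n, (if (u : ℕ) ∈ Finset.Ico (k - 1) (k + 2) then f u else 0)
          = ∑ j ∈ Finset.Ico (k - 1) (k + 2), F j := by
        have e2 : ∀ u : Fin n, (if (u : ℕ) ∈ Finset.Ico (k - 1) (k + 2) then f u else 0)
            = (fun j => if j ∈ Finset.Ico (k - 1) (k + 2) then F j else 0) (u : ℕ) := by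
          intro u
          simp only [hFdef]
          by_cases hmem : (u : ℕ) ∈ Finset.Ico (k - 1) (k + 2)
          · rw [if_pos hmem, if_pos hmem, dif_pos u.isLt]
          · rw [if_neg hmem, if_neg hmem]
        rw [Finset.sum_congr rfl (fun u _ => e2 u),
          Fin.sum_univ_eq_sum_range (fun j => if j ∈ Finset.Ico (k - 1) (k + 2) then F j else 0) n,
          Finset.sum_ite_mem]
        apply Finset.sum_subset
        · exact Finset.inter_subset_right
        · intro x hx hx'
          simp only [Finset.mem_inter, Finset.mem_range] at hx'
          apply hF0
          by_contra hc
          push_neg at hc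
          exact hx' ⟨hc, hx⟩
      rw [Finset.sum_filter, ← e3]
      apply Finset.sum_congr rfl
      intro u _
      have hiff : ((pathGraph n).Adj ⟨k, hk⟩ u ∨ u = ⟨k, hk⟩)
          ↔ ((u : ℕ) ∈ Finset.Ico (k - 1) (k + 2)) := by
        simp only [pathGraph_adj, Fin.ext_iff, Finset.mem_Ico]
        omega
      by_cases hc : (u : ℕ) ∈ Finset.Ico (k - 1) (k + 2)
      · rw [if_pos (hiff.mpr hc), if_pos hc]
      · rw [if_neg (fun hh => hc (hiff.mp hh)), if_neg hc]
    have := key_lemma n F hF0 hFdom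
    refine le_trans this (le_of_eq ?_)
    rw [← Fin.sum_univ_eq_sum_range F n]
    apply Finset.sum_congr rfl
    intro u _
    simp only [hFdef]
    rw [dif_pos u.isLt, Fin.eta]
  have hne : {w | ∃ f, IsTwoDomFn (pathGraph n) f ∧ w = ∑ v, f v}.Nonempty := by
    refine ⟨∑ v : Fin n, 2, fun _ => 2, ?_, rfl⟩
    intro v
    unfold nbhdSum
    refine Finset.single_le_sum (f := fun _ : Fin n => 2) (a := v) (fun _ _ => Nat.zero_le _) ?_
    simp only [Finset.mem_filter, Finset.mem_univ, true_and]
    exact Or.inr trivial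
  apply le_csInf hne
  rintro w ⟨f, hf, rfl⟩
  calc 2 * ⌈(n : ℚ) / 3⌉₊ ≤ 2 * ((n + 2) / 3) := by omega
  _ ≤ ∑ v, f v := hmain f hf
end

section
/- For every positive integer n, the integer {2}-domination number of the grid graph G_{2,n} = P_2 □ P_n is at most n+1. -/
open SimpleGraph Finset
open scoped Classical

def fgrid (n : ℕ) : Fin 2 × Fin n → ℕ := fun p =>
  if p.2.val % 2 = 0 then 1 else if p.1.val = 0 ∧ p.2.val + 1 = n then 1 else 0

lemma pair_le (n : ℕ) (v a b : Fin 2 × Fin n) (hab : a ≠ b)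
    (ha : (pathGraph 2 □ pathGraph n).Adj v a ∨ a = v)
    (hb : (pathGraph 2 □ pathGraph n).Adj v b ∨ b = v)
    (hfa : 1 ≤ fgrid n a) (hfb : 1 ≤ fgrid n b) :
    2 ≤ nbhdSum (pathGraph 2 □ pathGraph n) (fgrid n) v := by
  have hsub : ({a, b} : Finset (Fin 2 × Fin n)) ⊆
      Finset.univ.filter (fun u => (pathGraph 2 □ pathGraph n).Adj v u ∨ u = v) := by
    intro x hx
    simp only [Finset.mem_insert, Finset.mem_singleton] at hx
    rcases hx with rfl | rfl <;> simp only [Finset.mem_filter, Finset.mem_univ, true_and]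
    · exact ha
    · exact hb
  have h := Finset.sum_le_sum_of_subset (f := fgrid n) hsub
  rw [Finset.sum_pair hab] at h
  unfold nbhdSum
  refine le_trans (by omega : 2 ≤ fgrid n a + fgrid n b) ?_
  convert h using 2
  exact Finset.filter_congr_decidable ..

lemma adj01 (n : ℕ) (j : Fin n) (i k : Fin 2) (hik : i ≠ k) :
    (pathGraph 2 □ pathGraph n).Adj (i, j) (k, j) := by
  rw [SimpleGraph.boxProd_adj]
  left
  refine ⟨?_, rfl⟩
  rw [pathGraph_adj]
  have hi := i.isLt
  have hk := k.isLt
  have : i.val ≠ k.val := fun h => hik (Fin.ext h)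
  dsimp only
  omega

lemma adjcol (n : ℕ) (i : Fin 2) (j j' : Fin n) (h : j.val + 1 = j'.val ∨ j'.val + 1 = j.val) :
    (pathGraph 2 □ pathGraph n).Adj (i, j) (i, j') := by
  rw [SimpleGraph.boxProd_adj]
  right
  exact ⟨(pathGraph_adj).mpr h, rfl⟩

lemma nbhd_col (n : ℕ) (i k : Fin 2) (j : Fin n) :
    (pathGraph 2 □ pathGraph n).Adj (i, j) (k, j) ∨ ((k : Fin 2), j) = (i, j) := by
  by_cases hik : k = i
  · right; rw [hik]
  · left; exact adj01 n j i k (Ne.symm hik)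

lemma dom (n : ℕ) (hn : 0 < n) : IsTwoDomFn (pathGraph 2 □ pathGraph n) (fgrid n) := by
  rintro ⟨i, j⟩
  by_cases hj : j.val % 2 = 0
  · refine pair_le n (i, j) (0, j) (1, j) ?_ (nbhd_col n i 0 j) (nbhd_col n i 1 j) ?_ ?_
    · intro h
      have := congrArg Prod.fst h
      simp at this
    · simp [fgrid, hj]
    · simp [fgrid, hj]
  · have hj1 : 1 ≤ j.val := by omega
    have hjn : j.val < n := j.isLt
    by_cases hlast : j.val + 1 = n
    · refine pair_le n (i, j) (i, ⟨j.val - 1, by omega⟩) (0, j) ?_ ?_ (nbhd_col n i 0 j) ?_ ?_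
      · intro h
        have h2 := congrArg (fun p => (Prod.snd p).val) h
        simp only at h2
        omega
      · exact Or.inl (adjcol n i j ⟨j.val - 1, by omega⟩ (by simp; omega))
      · simp only [fgrid]
        have : (j.val - 1) % 2 = 0 := by omega
        simp [this]
      · simp [fgrid, hj, hlast]
    · refine pair_le n (i, j) (i, ⟨j.val - 1, by omega⟩) (i, ⟨j.val + 1, by omega⟩)
        ?_ ?_ ?_ ?_ ?_
      · intro h
        have h2 := congrArg (fun p => (Prod.snd p).val) h
        simp only at h2
        omega
      · exact Or.inl (adjcol n i j ⟨j.val - 1, by omega⟩ (by simp; omega))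
      · exact Or.inl (adjcol n i j ⟨j.val + 1, by omega⟩ (by simp))
      · simp only [fgrid]
        have : (j.val - 1) % 2 = 0 := by omega
        simp [this]
      · simp only [fgrid]
        have : (j.val + 1) % 2 = 0 := by omega
        simp [this]

lemma sum_even (m : ℕ) :
    ∑ j ∈ Finset.range m, (if j % 2 = 0 then (1:ℕ) else 0) = (m + 1) / 2 := by
  induction m with
  | zero => simp
  | succ k ih =>
    rw [Finset.sum_range_succ, ih]
    by_cases h : k % 2 = 0 <;> simp [h] <;> omega

lemma total (n : ℕ) (hn : 0 < n) : ∑ v, fgrid n v = n + 1 := by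
  rw [Fintype.sum_prod_type, Fin.sum_univ_two]
  have h0 : ∀ j : Fin n, fgrid n (0, j) =
      (if j.val % 2 = 0 then 1 else 0) + (if j.val % 2 ≠ 0 ∧ j.val = n - 1 then 1 else 0) := by
    intro j
    simp only [fgrid]
    by_cases h : j.val % 2 = 0
    · simp [h]
    · have : (j.val + 1 = n) ↔ (j.val = n - 1) := by omega
      simp [h, this]
  have h1 : ∀ j : Fin n, fgrid n (1, j) = (if j.val % 2 = 0 then 1 else 0) := by
    intro j
    simp only [fgrid]
    by_cases h : j.val % 2 = 0 <;> simp [h]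
  simp only [h0, h1, Finset.sum_add_distrib]
  rw [Fin.sum_univ_eq_sum_range (fun j => if j % 2 = 0 then (1:ℕ) else 0) n, sum_even]
  rw [Fin.sum_univ_eq_sum_range (fun j => if j % 2 ≠ 0 ∧ j = n - 1 then (1:ℕ) else 0) n]
  have hsplit : ∀ j : ℕ, (if j % 2 ≠ 0 ∧ j = n - 1 then (1:ℕ) else 0)
      = if j = n - 1 then (if (n-1) % 2 ≠ 0 then 1 else 0) else 0 := by
    intro j
    by_cases h : j = n - 1
    · subst h; simp
    · simp [h]
  simp only [hsplit]
  rw [Finset.sum_ite_eq' (Finset.range n) (n - 1)]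
  have : n - 1 ∈ Finset.range n := by simp; omega
  simp only [this, if_true]
  by_cases h : (n - 1) % 2 = 0 <;> simp [h] <;> omega

theorem stmt_4 (n : ℕ) (hn : 0 < n) :
    gamma2 (pathGraph 2 □ pathGraph n) ≤ n + 1 := by
  apply Nat.sInf_le
  exact ⟨fgrid n, dom n hn, (total n hn).symm⟩
end

section
/- For every positive integer n, the integer {2}-domination number of the grid graph G_{2,n} = P_2 □ P_n is at least n+1. -/
open SimpleGraph Finset
open scoped Classical

private lemma sum_shift (c : ℕ → ℕ) (n : ℕ) (hn : 1 ≤ n) :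
    ∑ k ∈ Finset.Icc 1 n, (c (k-1) + 2*c k + c (k+1)) + c 1 + c n
      = 4 * (∑ k ∈ Finset.Icc 1 n, c k) + c 0 + c (n+1) := by
  induction n, hn using Nat.le_induction with
  | base => simp [Finset.Icc_self]; ring
  | succ n hn ih =>
    rw [Finset.sum_Icc_succ_top (by omega), Finset.sum_Icc_succ_top (by omega)]
    simp only [Nat.add_sub_cancel] at *
    omega

/-- Sum of `f` over column `k-1` (columns indexed `1..n`; `0` elsewhere). -/
noncomputable def colSum (n : ℕ) (f : Fin 2 × Fin n → ℕ) (k : ℕ) : ℕ :=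
  ∑ u : Fin 2 × Fin n, if (u.2 : ℕ) + 1 = k then f u else 0

private lemma colSum_zero (n : ℕ) (f : Fin 2 × Fin n → ℕ) : colSum n f 0 = 0 :=
  Finset.sum_eq_zero (by intro u _; simp)

private lemma colSum_top (n : ℕ) (f : Fin 2 × Fin n → ℕ) : colSum n f (n+1) = 0 := by
  refine Finset.sum_eq_zero (fun u _ => ?_)
  have := u.2.isLt
  rw [if_neg]; omega

private lemma colSum_total (n : ℕ) (f : Fin 2 × Fin n → ℕ) :
    ∑ k ∈ Finset.Icc 1 n, colSum n f k = ∑ v, f v := by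
  unfold colSum
  rw [Finset.sum_comm]
  refine Finset.sum_congr rfl (fun u _ => ?_)
  rw [Finset.sum_ite_eq, if_pos]
  simp only [Finset.mem_Icc]
  have := u.2.isLt
  omega

private lemma twoDom_const {V : Type*} [Fintype V] (G : SimpleGraph V) :
    IsTwoDomFn G (fun _ => 2) := by
  intro v
  unfold nbhdSum
  apply Finset.single_le_sum (f := fun _ => (2:ℕ)) (fun _ _ => Nat.zero_le _) (a := v)
  exact Finset.mem_filter.mpr ⟨Finset.mem_univ v, Or.inr rfl⟩

private lemma key_ineq (n : ℕ) (f : Fin 2 × Fin n → ℕ)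
    (hf : IsTwoDomFn (pathGraph 2 □ pathGraph n) f) (k : ℕ) (hk1 : 1 ≤ k) (hk2 : k ≤ n) :
    4 ≤ colSum n f (k-1) + 2 * colSum n f k + colSum n f (k+1) := by
  have hj : k - 1 < n := by omega
  have h0 := hf (⟨0, by omega⟩, ⟨k-1, hj⟩)
  have h1 := hf (⟨1, by omega⟩, ⟨k-1, hj⟩)
  have hsum : nbhdSum (pathGraph 2 □ pathGraph n) f (⟨0, by omega⟩, ⟨k-1, hj⟩)
        + nbhdSum (pathGraph 2 □ pathGraph n) f (⟨1, by omega⟩, ⟨k-1, hj⟩)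
      ≤ colSum n f (k-1) + 2 * colSum n f k + colSum n f (k+1) := by
    simp only [nbhdSum, Finset.sum_filter]
    rw [← Finset.sum_add_distrib]
    have hrhs : colSum n f (k-1) + 2 * colSum n f k + colSum n f (k+1)
        = ∑ u : Fin 2 × Fin n,
          ((if (u.2:ℕ)+1 = k-1 then f u else 0) + 2*(if (u.2:ℕ)+1 = k then f u else 0)
            + (if (u.2:ℕ)+1 = k+1 then f u else 0)) := by
      simp only [colSum, Finset.sum_add_distrib, Finset.mul_sum]
    rw [hrhs]
    refine Finset.sum_le_sum (fun u _ => ?_)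
    obtain ⟨i, jc⟩ := u
    have hi := i.isLt
    have hjc := jc.isLt
    simp only [boxProd_adj, pathGraph_adj, Prod.mk.injEq, Fin.ext_iff, Fin.val_mk]
    split_ifs <;> omega
  omega

theorem stmt_5 (n : ℕ) (hn : 0 < n) :
    n + 1 ≤ gamma2 (pathGraph 2 □ pathGraph n) := by
  apply le_csInf
  · exact ⟨∑ _v : Fin 2 × Fin n, 2, fun _ => 2, twoDom_const _, rfl⟩
  · rintro w ⟨f, hf, rfl⟩
    have hc0 := colSum_zero n f
    have hcn1 := colSum_top n f
    have key := key_ineq n f hf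
    have hshift := sum_shift (colSum n f) n hn
    rw [colSum_total] at hshift
    by_cases hb : colSum n f 1 = 0 ∧ colSum n f n = 0
    · obtain ⟨hb1, hbn⟩ := hb
      have hc2 : 4 ≤ colSum n f 2 := by
        have := key 1 le_rfl hn
        norm_num at this
        omega
      rcases Nat.lt_or_ge n 3 with h3 | h3
      · have hn12 : n = 1 ∨ n = 2 := by omega
        rcases hn12 with h | h
        · have h2 : colSum n f 2 = 0 := by rw [show (2:ℕ) = n+1 by omega]; exact hcn1
          omega
        · have h2 : colSum n f 2 = 0 := by rw [show (2:ℕ) = n by omega]; exact hbn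
          omega
      · have ht2 : 8 ≤ colSum n f (2-1) + 2 * colSum n f 2 + colSum n f (2+1) := by
          norm_num; omega
        have hsum2 : 4*n+4 ≤ ∑ k ∈ Finset.Icc 1 n,
            (colSum n f (k-1) + 2*colSum n f k + colSum n f (k+1)) := by
          have hval : ∑ k ∈ Finset.Icc 1 n, (if k = 2 then 8 else 4) = 4*n+4 := by
            have h2mem : (2 : ℕ) ∈ Finset.Icc 1 n := by simp; omega
            have hptw : ∀ k, (if k = 2 then 8 else 4) = 4 + (if k = 2 then 4 else 0) := by
              intro k; split_ifs <;> rfl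
            simp only [hptw]
            rw [Finset.sum_add_distrib, Finset.sum_const,
              Finset.sum_ite_eq' (Finset.Icc 1 n) 2 (fun _ => 4), if_pos h2mem, Nat.card_Icc]
            simp; omega
          rw [← hval]
          refine Finset.sum_le_sum (fun k hk => ?_)
          simp only [Finset.mem_Icc] at hk
          split_ifs with h
          · subst h; exact ht2
          · exact key k hk.1 hk.2
        omega
    · have hb' : 1 ≤ colSum n f 1 + colSum n f n := by
        rcases Nat.eq_zero_or_pos (colSum n f 1) with h | h
        · rcases Nat.eq_zero_or_pos (colSum n f n) with h' | h'
          · exact absurd ⟨h, h'⟩ hb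
          · omega
        · omega
      have hsum4 : 4*n ≤ ∑ k ∈ Finset.Icc 1 n,
          (colSum n f (k-1) + 2*colSum n f k + colSum n f (k+1)) := by
        have hval : ∑ _k ∈ Finset.Icc 1 n, (4:ℕ) = 4*n := by
          rw [Finset.sum_const, Nat.card_Icc]; simp; omega
        rw [← hval]
        exact Finset.sum_le_sum (fun k hk => by
          simp only [Finset.mem_Icc] at hk; exact key k hk.1 hk.2)
      omega
end

section
/- For every positive integer n, the integer {2}-domination number of the grid graph G_{3,n} = P_3 □ P_n is at most ⌊3n/2⌋ + 1. -/
open SimpleGraph Finset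
open scoped Classical

/-- The explicit dominating function. -/
def gridF (n : ℕ) (v : Fin 3 × Fin n) : ℕ :=
  v.2.val % 2 +
  (if v.1.val = 1 ∧ v.2.val = 0 then 1 else 0) +
  (if v.1.val = 1 ∧ n % 2 = 1 ∧ v.2.val = n - 1 then 1 else 0)

lemma pair_le_nbhdSum {V : Type*} [Fintype V] (G : SimpleGraph V) (f : V → ℕ)
    (v u1 u2 : V) (h1 : G.Adj v u1 ∨ u1 = v) (h2 : G.Adj v u2 ∨ u2 = v)
    (hne : u1 ≠ u2) (hf : 2 ≤ f u1 + f u2) : 2 ≤ nbhdSum G f v := by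
  have hsub : ({u1, u2} : Finset V) ⊆ Finset.univ.filter (fun u => G.Adj v u ∨ u = v) := by
    intro x hx
    simp only [Finset.mem_insert, Finset.mem_singleton] at hx
    simp only [Finset.mem_filter, Finset.mem_univ, true_and]
    rcases hx with rfl | rfl
    · exact h1
    · exact h2
  calc 2 ≤ f u1 + f u2 := hf
    _ = ∑ u ∈ ({u1, u2} : Finset V), f u := (Finset.sum_pair hne).symm
    _ ≤ nbhdSum G f v := Finset.sum_le_sum_of_subset hsub

lemma single_le_nbhdSum {V : Type*} [Fintype V] (G : SimpleGraph V) (f : V → ℕ)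
    (v u : V) (h1 : G.Adj v u ∨ u = v) (hf : 2 ≤ f u) : 2 ≤ nbhdSum G f v := by
  have hsub : ({u} : Finset V) ⊆ Finset.univ.filter (fun u => G.Adj v u ∨ u = v) := by
    intro x hx
    simp only [Finset.mem_singleton] at hx
    subst hx
    simp only [Finset.mem_filter, Finset.mem_univ, true_and]
    exact h1
  calc 2 ≤ f u := hf
    _ = ∑ x ∈ ({u} : Finset V), f x := (Finset.sum_singleton f u).symm
    _ ≤ nbhdSum G f v := Finset.sum_le_sum_of_subset hsub

lemma sum_range_mod_two (m : ℕ) : ∑ j ∈ Finset.range m, j % 2 = m / 2 := by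
  induction m with
  | zero => simp
  | succ k ih => rw [Finset.sum_range_succ, ih]; omega

lemma gridF_isTwoDom (n : ℕ) (hn : 0 < n) :
    IsTwoDomFn (pathGraph 3 □ pathGraph n) (gridF n) := by
  intro v
  obtain ⟨i, j⟩ := v
  have hi3 : i.val < 3 := i.isLt
  have hjn : j.val < n := j.isLt
  by_cases hodd : j.val % 2 = 1
  · -- odd column: v itself (or (0,j) if i = 1) and the middle (1,j)
    by_cases hi : i.val = 1
    · refine pair_le_nbhdSum _ _ _ (i, j) (⟨0, by omega⟩, j) (Or.inr rfl) ?_ ?_ ?_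
      · left
        simp only [boxProd_adj, pathGraph_adj, Prod.mk.injEq, Fin.ext_iff, Fin.val_mk,
          and_true, true_and, true_or, or_true]
        try omega
      · simp only [ne_eq, Prod.mk.injEq, Fin.ext_iff, Fin.val_mk, and_true, true_and, true_or, or_true]
        try omega
      · simp [gridF, Fin.val_mk]
        split_ifs <;> omega
    · refine pair_le_nbhdSum _ _ _ (i, j) (⟨1, by omega⟩, j) (Or.inr rfl) ?_ ?_ ?_
      · left
        simp only [boxProd_adj, pathGraph_adj, Prod.mk.injEq, Fin.ext_iff, Fin.val_mk,
          and_true, true_and, true_or, or_true]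
        try omega
      · simp only [ne_eq, Prod.mk.injEq, Fin.ext_iff, Fin.val_mk, and_true, true_and, true_or, or_true]
        try omega
      · simp [gridF, Fin.val_mk]
        split_ifs <;> omega
  · have heven : j.val % 2 = 0 := by omega
    by_cases h0 : j.val = 0
    · by_cases hn1 : n = 1
      · -- n = 1 : the middle vertex has weight 2
        refine single_le_nbhdSum _ _ _ (⟨1, by omega⟩, j) ?_ ?_
        · by_cases hi : i.val = 1
          · right
            simp only [Prod.mk.injEq, Fin.ext_iff, Fin.val_mk, and_true, true_and, true_or, or_true]
            try omega
          · left
            simp only [boxProd_adj, pathGraph_adj, Prod.mk.injEq, Fin.ext_iff, Fin.val_mk,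
          and_true, true_and, true_or, or_true]
            try omega
        · simp [gridF, Fin.val_mk]
          split_ifs <;> omega
      · -- n ≥ 2 : use (i, 1) and (1, 0)
        have hn2 : 2 ≤ n := by omega
        refine pair_le_nbhdSum _ _ _ (i, ⟨1, by omega⟩) (⟨1, by omega⟩, j) ?_ ?_ ?_ ?_
        · left
          simp only [boxProd_adj, pathGraph_adj, Prod.mk.injEq, Fin.ext_iff, Fin.val_mk,
          and_true, true_and, true_or, or_true]
          try omega
        · by_cases hi : i.val = 1
          · right
            simp only [Prod.mk.injEq, Fin.ext_iff, Fin.val_mk, and_true, true_and, true_or, or_true]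
            try omega
          · left
            simp only [boxProd_adj, pathGraph_adj, Prod.mk.injEq, Fin.ext_iff, Fin.val_mk,
          and_true, true_and, true_or, or_true]
            try omega
        · simp only [ne_eq, Prod.mk.injEq, Fin.ext_iff, Fin.val_mk, and_true, true_and, true_or, or_true]
          try omega
        · simp [gridF, Fin.val_mk]
          split_ifs <;> omega
    · -- j even, j ≥ 2
      by_cases hl : j.val = n - 1
      · -- last column, n odd: use (i, j-1) and (1, n-1)
        have hnodd : n % 2 = 1 := by omega
        refine pair_le_nbhdSum _ _ _ (i, ⟨j.val - 1, by omega⟩) (⟨1, by omega⟩, j) ?_ ?_ ?_ ?_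
        · left
          simp only [boxProd_adj, pathGraph_adj, Prod.mk.injEq, Fin.ext_iff, Fin.val_mk,
          and_true, true_and, true_or, or_true]
          try omega
        · by_cases hi : i.val = 1
          · right
            simp only [Prod.mk.injEq, Fin.ext_iff, Fin.val_mk, and_true, true_and, true_or, or_true]
            try omega
          · left
            simp only [boxProd_adj, pathGraph_adj, Prod.mk.injEq, Fin.ext_iff, Fin.val_mk,
          and_true, true_and, true_or, or_true]
            try omega
        · simp only [ne_eq, Prod.mk.injEq, Fin.ext_iff, Fin.val_mk, and_true, true_and, true_or, or_true]
          try omega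
        · simp [gridF, Fin.val_mk]
          split_ifs <;> omega
      · -- interior even column: use (i, j-1) and (i, j+1)
        refine pair_le_nbhdSum _ _ _ (i, ⟨j.val - 1, by omega⟩) (i, ⟨j.val + 1, by omega⟩)
          ?_ ?_ ?_ ?_
        · left
          simp only [boxProd_adj, pathGraph_adj, Prod.mk.injEq, Fin.ext_iff, Fin.val_mk,
          and_true, true_and, true_or, or_true]
          try omega
        · left
          simp only [boxProd_adj, pathGraph_adj, Prod.mk.injEq, Fin.ext_iff, Fin.val_mk,
          and_true, true_and, true_or, or_true]
          try omega
        · simp only [ne_eq, Prod.mk.injEq, Fin.ext_iff, Fin.val_mk, and_true, true_and, true_or, or_true]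
          try omega
        · simp [gridF, Fin.val_mk]
          split_ifs <;> omega

lemma gridF_sum (n : ℕ) (hn : 0 < n) : ∑ v, gridF n v = 3 * n / 2 + 1 := by
  rw [Fintype.sum_prod_type]
  have hcol : ∀ i : Fin 3, ∑ j : Fin n, gridF n (i, j) =
      n / 2 + (if i.val = 1 then 1 + n % 2 else 0) := by
    intro i
    have h1 : ∑ j : Fin n, (j : ℕ) % 2 = n / 2 := by
      rw [Fin.sum_univ_eq_sum_range (fun j => j % 2)]
      exact sum_range_mod_two n
    have h2 : ∑ j : Fin n, (if i.val = 1 ∧ (j : ℕ) = 0 then 1 else 0) =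
        (if i.val = 1 then 1 else 0) := by
      by_cases hi : i.val = 1
      · simp only [hi, true_and, if_true]
        rw [Fin.sum_univ_eq_sum_range (fun j => if j = 0 then 1 else 0)]
        rw [Finset.sum_ite_eq' (Finset.range n) 0 (fun _ => 1)]
        simp [Finset.mem_range, hn]
      · simp [hi]
    have h3 : ∑ j : Fin n, (if i.val = 1 ∧ n % 2 = 1 ∧ (j : ℕ) = n - 1 then 1 else 0) =
        (if i.val = 1 then n % 2 else 0) := by
      by_cases hi : i.val = 1
      · by_cases hpar : n % 2 = 1
        · simp only [hi, hpar, true_and, if_true]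
          rw [Fin.sum_univ_eq_sum_range (fun j => if j = n - 1 then 1 else 0)]
          rw [Finset.sum_ite_eq' (Finset.range n) (n - 1) (fun _ => 1)]
          simp only [Finset.mem_range]
          rw [if_pos (by omega)]
        · have hz : n % 2 = 0 := by omega
          simp [hz]
      · simp [hi]
    simp only [gridF]
    rw [Finset.sum_add_distrib, Finset.sum_add_distrib, h1, h2, h3]
    by_cases hi : (i : ℕ) = 1 <;> (simp [hi]; try omega)
  simp only [hcol]
  rw [Fin.sum_univ_three]
  have e0 : ((0 : Fin 3) : ℕ) = 0 := rfl
  have e1 : ((1 : Fin 3) : ℕ) = 1 := rfl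
  have e2 : ((2 : Fin 3) : ℕ) = 2 := rfl
  rw [e0, e1, e2]
  norm_num
  omega

theorem stmt_6 (n : ℕ) (hn : 0 < n) :
    gamma2 (pathGraph 3 □ pathGraph n) ≤ 3 * n / 2 + 1 := by
  have hmem : (3 * n / 2 + 1) ∈
      {w | ∃ f, IsTwoDomFn (pathGraph 3 □ pathGraph n) f ∧ w = ∑ v, f v} :=
    ⟨gridF n, gridF_isTwoDom n hn, (gridF_sum n hn).symm⟩
  exact Nat.sInf_le hmem
end

section
/- Let G=(V,E) be a finite graph with maximum degree Δ, and let f be an integer {2}-dominating function of G with total weight exactly 2|V|/(Δ+1). Then for every vertex v we have ∑_{u∈N[v]} f(u) = 2, and every vertex w of degree strictly less than Δ satisfies f(w) = 0. -/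
open SimpleGraph Finset
open scoped Classical

lemma sum_nbhdSum {V : Type*} [Fintype V] (G : SimpleGraph V) (f : V → ℕ) :
    ∑ v, nbhdSum G f v = ∑ u, f u * (G.degree u + 1) := by
  unfold nbhdSum
  simp_rw [Finset.sum_filter]
  rw [Finset.sum_comm]
  refine Finset.sum_congr rfl fun u _ => ?_
  have : (Finset.univ.filter (fun v => G.Adj v u ∨ u = v)).card = G.degree u + 1 := by
    rw [← SimpleGraph.card_neighborFinset_eq_degree]
    have : Finset.univ.filter (fun v => G.Adj v u ∨ u = v) = insert u (G.neighborFinset u) := by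
      ext v
      simp [adj_comm, eq_comm, or_comm]
    rw [this, Finset.card_insert_of_notMem (by simp)]
  rw [← this]
  simp [Finset.sum_ite, Finset.sum_const, mul_comm]

theorem stmt_8 {V : Type*} [Fintype V] (G : SimpleGraph V) (f : V → ℕ)
    (hf : IsTwoDomFn G f)
    (hw : (∑ v, f v : ℚ) = 2 * Fintype.card V / (G.maxDegree + 1)) :
    (∀ v, nbhdSum G f v = 2) ∧ ∀ w, G.degree w < G.maxDegree → f w = 0 := by
  have hpos : ((G.maxDegree : ℚ) + 1) ≠ 0 := by positivity
  have hw' : (∑ v, f v) * (G.maxDegree + 1) = 2 * Fintype.card V := by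
    have : ((∑ v, f v : ℕ) : ℚ) * ((G.maxDegree : ℚ) + 1) = 2 * Fintype.card V := by
      push_cast
      rw [hw]; field_simp
    exact_mod_cast this
  -- upper bound chain
  have h1 : ∑ u, f u * (G.degree u + 1) ≤ ∑ u, f u * (G.maxDegree + 1) :=
    Finset.sum_le_sum fun u _ => Nat.mul_le_mul_left _ (by
      have := G.degree_le_maxDegree u; omega)
  have h2 : ∑ u, f u * (G.maxDegree + 1) = 2 * Fintype.card V := by
    rw [← Finset.sum_mul, hw']
  have h3 : 2 * Fintype.card V ≤ ∑ v, nbhdSum G f v := by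
    calc 2 * Fintype.card V = ∑ _v : V, 2 := by
          rw [Finset.sum_const, Finset.card_univ]; ring
      _ ≤ ∑ v, nbhdSum G f v := Finset.sum_le_sum fun v _ => hf v
  have hkey : ∑ v, nbhdSum G f v = 2 * Fintype.card V := by
    have := sum_nbhdSum G f
    omega
  constructor
  · -- each nbhdSum = 2
    have : ∑ _v : V, 2 = ∑ v, nbhdSum G f v := by
      rw [hkey, Finset.sum_const, Finset.card_univ]; ring
    intro v
    exact ((Finset.sum_eq_sum_iff_of_le fun i _ => hf i).1 this v (Finset.mem_univ v)).symm
  · -- degree < max implies f = 0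
    have hsum2 : ∑ u, f u * (G.degree u + 1) = ∑ u, f u * (G.maxDegree + 1) := by
      have := sum_nbhdSum G f
      omega
    intro w hdeg
    have := (Finset.sum_eq_sum_iff_of_le (fun u _ => Nat.mul_le_mul_left _ (by
      have := G.degree_le_maxDegree u; omega))).1 hsum2 w (Finset.mem_univ w)
    by_contra hfw
    have : G.degree w + 1 = G.maxDegree + 1 := Nat.eq_of_mul_eq_mul_left (Nat.pos_of_ne_zero hfw) (by omega)
    omega
end

section
/- For every positive integer k, the integer {2}-domination number of the grid graph G_{2,2k} = P_2 □ P_{2k} is strictly greater than 2k. -/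
open SimpleGraph Finset
open scoped Classical

private lemma sum_insert_le' {α : Type*} [DecidableEq α] (f : α → ℕ) (a : α) (s : Finset α) :
    ∑ x ∈ insert a s, f x ≤ f a + ∑ x ∈ s, f x := by
  by_cases h : a ∈ s
  · rw [Finset.insert_eq_self.2 h]; exact Nat.le_add_left _ _
  · rw [Finset.sum_insert h]

private lemma sum_four_le {α : Type*} [DecidableEq α] (f : α → ℕ) (a b c d : α) :
    ∑ x ∈ ({a, b, c, d} : Finset α), f x ≤ f a + f b + f c + f d := by
  refine le_trans (sum_insert_le' f a _) ?_
  refine le_trans (Nat.add_le_add_left (sum_insert_le' f b _) _) ?_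
  refine le_trans (Nat.add_le_add_left (Nat.add_le_add_left (sum_insert_le' f c _) _) _) ?_
  simp only [Finset.sum_singleton]
  omega

private lemma sum_three_le {α : Type*} [DecidableEq α] (f : α → ℕ) (a b c : α) :
    ∑ x ∈ ({a, b, c} : Finset α), f x ≤ f a + f b + f c := by
  refine le_trans (sum_insert_le' f a _) ?_
  refine le_trans (Nat.add_le_add_left (sum_insert_le' f b _) _) ?_
  simp only [Finset.sum_singleton]
  omega

section grid
variable {n : ℕ} [NeZero n]

private lemma val_one_eq (hn : 2 ≤ n) : (1 : Fin n).val = 1 := by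
  rw [Fin.val_one']
  exact Nat.mod_eq_of_lt (by omega)

private lemma val_add_one (hn : 2 ≤ n) (j : Fin n) (h : j.val + 1 < n) :
    (j + 1).val = j.val + 1 := by
  rw [Fin.add_def]
  show (j.val + (1 : Fin n).val) % n = j.val + 1
  rw [val_one_eq hn]
  exact Nat.mod_eq_of_lt h

private lemma val_sub_one (hn : 2 ≤ n) (j : Fin n) (h : 0 < j.val) :
    (j - 1).val = j.val - 1 := by
  rw [Fin.sub_def]
  show (n - (1 : Fin n).val + j.val) % n = j.val - 1
  rw [val_one_eq hn]
  have hlt := j.isLt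
  rw [show n - 1 + j.val = n + (j.val - 1) by omega, Nat.add_mod_left,
    Nat.mod_eq_of_lt (by omega)]

omit [NeZero n] in
private lemma adj_cases (v u : Fin 2 × Fin n)
    (h : (pathGraph 2 □ pathGraph n).Adj v u ∨ u = v) :
    u = v ∨ u = (v.1 + 1, v.2) ∨ (u.1 = v.1 ∧ (u.2.val = v.2.val + 1 ∨ u.2.val + 1 = v.2.val)) := by
  rcases h with h | h
  · rw [boxProd_adj] at h
    rcases h with ⟨h1, h2⟩ | ⟨h2, h1⟩
    · right; left
      rw [pathGraph_adj] at h1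
      have hv := v.1.isLt; have hu := u.1.isLt
      have : u.1 = v.1 + 1 := by
        apply Fin.ext
        rw [Fin.add_def]
        simp only [Fin.val_one]
        omega
      rw [Prod.ext_iff]; exact ⟨this, h2.symm⟩
    · right; right
      rw [pathGraph_adj] at h2
      exact ⟨h1.symm, by omega⟩
  · left; exact h

variable (f : Fin 2 × Fin n → ℕ)

private lemma ub_gen (hn : 2 ≤ n) (v : Fin 2 × Fin n) :
    nbhdSum (pathGraph 2 □ pathGraph n) f v ≤
      f v + f (v.1 + 1, v.2) + f (v.1, v.2 + 1) + f (v.1, v.2 - 1) := by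
  refine le_trans (Finset.sum_le_sum_of_subset ?_) (sum_four_le f v _ _ _)
  intro u hu
  simp only [Finset.mem_filter, Finset.mem_univ, true_and] at hu
  simp only [Finset.mem_insert, Finset.mem_singleton]
  rcases adj_cases v u hu with h | h | ⟨h1, h2 | h2⟩
  · tauto
  · tauto
  · have : u = (v.1, v.2 + 1) := by
      rw [Prod.ext_iff]
      refine ⟨h1, Fin.ext ?_⟩
      rw [val_add_one hn v.2 (by have := u.2.isLt; omega)]
      omega
    tauto
  · have : u = (v.1, v.2 - 1) := by
      rw [Prod.ext_iff]
      refine ⟨h1, Fin.ext ?_⟩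
      rw [val_sub_one hn v.2 (by omega)]
      omega
    tauto

private lemma ub_left (hn : 2 ≤ n) (i : Fin 2) (z : Fin n) (hz0 : z.val = 0) :
    nbhdSum (pathGraph 2 □ pathGraph n) f (i, z) ≤
      f (i, z) + f (i + 1, z) + f (i, z + 1) := by
  refine le_trans (Finset.sum_le_sum_of_subset ?_) (sum_three_le f _ _ _)
  intro u hu
  simp only [Finset.mem_filter, Finset.mem_univ, true_and] at hu
  simp only [Finset.mem_insert, Finset.mem_singleton]
  rcases adj_cases _ u hu with h | h | ⟨h1, h2 | h2⟩
  · tauto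
  · tauto
  · have : u = (i, z + 1) := by
      rw [Prod.ext_iff]
      refine ⟨h1, Fin.ext ?_⟩
      rw [val_add_one hn _ (by omega)]
      simp only [] at h2
      omega
    tauto
  · exfalso; simp only [] at h2; omega

private lemma ub_right (hn : 2 ≤ n) (i : Fin 2) (L : Fin n) (hL0 : L.val = n - 1) :
    nbhdSum (pathGraph 2 □ pathGraph n) f (i, L) ≤
      f (i, L) + f (i + 1, L) + f (i, L - 1) := by
  refine le_trans (Finset.sum_le_sum_of_subset ?_) (sum_three_le f _ _ _)
  intro u hu
  simp only [Finset.mem_filter, Finset.mem_univ, true_and] at hu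
  simp only [Finset.mem_insert, Finset.mem_singleton]
  rcases adj_cases _ u hu with h | h | ⟨h1, h2 | h2⟩
  · tauto
  · tauto
  · exfalso; have := u.2.isLt; simp only [] at h2; omega
  · have : u = (i, L - 1) := by
      rw [Prod.ext_iff]
      refine ⟨h1, Fin.ext ?_⟩
      rw [val_sub_one hn _ (by omega)]
      simp only [] at h2
      omega
    tauto

omit [NeZero n] in
private lemma lb_pair (a : Fin n) :
    f (0, a) + f (1, a) ≤ nbhdSum (pathGraph 2 □ pathGraph n) f ((0 : Fin 2), a) := by
  have hpair : ∑ x ∈ ({((0 : Fin 2), a), ((1 : Fin 2), a)} : Finset (Fin 2 × Fin n)), f x =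
      f (0, a) + f (1, a) := Finset.sum_pair (by simp)
  rw [← hpair, nbhdSum]
  apply Finset.sum_le_sum_of_subset
  intro u hu
  simp only [Finset.mem_insert, Finset.mem_singleton] at hu
  simp only [Finset.mem_filter, Finset.mem_univ, true_and]
  rcases hu with h | h
  · right; exact h
  · left
    subst h
    rw [boxProd_adj]
    left
    exact ⟨pathGraph_adj.2 (Or.inl rfl), rfl⟩

private lemma sumB :
    ∑ v : Fin 2 × Fin n, (f v + f (v.1 + 1, v.2) + f (v.1, v.2 + 1) + f (v.1, v.2 - 1)) =
      4 * ∑ v, f v := by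
  rw [Finset.sum_add_distrib, Finset.sum_add_distrib, Finset.sum_add_distrib]
  have e1 : ∑ v : Fin 2 × Fin n, f (v.1 + 1, v.2) = ∑ v, f v :=
    Fintype.sum_bijective (fun v : Fin 2 × Fin n => (v.1 + 1, v.2))
      ((Equiv.prodCongr (Equiv.addRight (1 : Fin 2)) (Equiv.refl (Fin n))).bijective)
      _ _ (fun x => rfl)
  have e2 : ∑ v : Fin 2 × Fin n, f (v.1, v.2 + 1) = ∑ v, f v :=
    Fintype.sum_bijective (fun v : Fin 2 × Fin n => (v.1, v.2 + 1))
      ((Equiv.prodCongr (Equiv.refl (Fin 2)) (Equiv.addRight (1 : Fin n))).bijective)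
      _ _ (fun x => rfl)
  have e3 : ∑ v : Fin 2 × Fin n, f (v.1, v.2 - 1) = ∑ v, f v :=
    Fintype.sum_bijective (fun v : Fin 2 × Fin n => (v.1, v.2 - 1))
      ((Equiv.prodCongr (Equiv.refl (Fin 2)) (Equiv.subRight (1 : Fin n))).bijective)
      _ _ (fun x => rfl)
  rw [e1, e2, e3]
  ring

end grid

private lemma main_bound {n : ℕ} [NeZero n] (hn : 2 ≤ n) (f : Fin 2 × Fin n → ℕ)
    (hf : IsTwoDomFn (pathGraph 2 □ pathGraph n) f) : n < ∑ v, f v := by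
  set z : Fin n := ⟨0, by omega⟩ with hz
  set L : Fin n := ⟨n - 1, by omega⟩ with hL
  have hz0 : z.val = 0 := rfl
  have hL0 : L.val = n - 1 := rfl
  have hzL : z ≠ L := by
    simp only [hz, hL, ne_eq, Fin.mk.injEq]
    omega
  have hLz : L + 1 = z := by
    apply Fin.ext
    rw [Fin.add_def]
    show (L.val + (1 : Fin n).val) % n = z.val
    rw [val_one_eq hn, hz0, hL0]
    rw [show n - 1 + 1 = n by omega]
    simp
  have hzL' : z - 1 = L := by
    apply Fin.ext
    rw [Fin.sub_def]
    show (n - (1 : Fin n).val + z.val) % n = L.val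
    rw [val_one_eq hn, hz0, hL0, Nat.add_zero, Nat.mod_eq_of_lt (by omega)]
  set wrap : Fin 2 × Fin n → ℕ := fun v =>
    (if v = ((0 : Fin 2), z) then f (0, L) else 0) +
    (if v = ((1 : Fin 2), z) then f (1, L) else 0) +
    (if v = ((0 : Fin 2), L) then f (0, z) else 0) +
    (if v = ((1 : Fin 2), L) then f (1, z) else 0) with hwrap
  set B : Fin 2 × Fin n → ℕ := fun v =>
    f v + f (v.1 + 1, v.2) + f (v.1, v.2 + 1) + f (v.1, v.2 - 1) with hB
  have key : ∀ v, nbhdSum (pathGraph 2 □ pathGraph n) f v + wrap v ≤ B v := by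
    rintro ⟨i, j⟩
    by_cases hjz : j = z
    · subst hjz
      fin_cases i
      · show nbhdSum (pathGraph 2 □ pathGraph n) f ((0 : Fin 2), z) + wrap ((0 : Fin 2), z) ≤
          B ((0 : Fin 2), z)
        have h1 := ub_left f hn 0 z hz0
        have hwv : wrap ((0 : Fin 2), z) = f (0, L) := by
          simp [hwrap, hzL, Prod.ext_iff]
        have hBv : B ((0 : Fin 2), z) = f (0, z) + f (0 + 1, z) + f (0, z + 1) + f (0, L) := by
          simp only [hB]
          rw [hzL']
        rw [hwv, hBv]
        omega
      · show nbhdSum (pathGraph 2 □ pathGraph n) f ((1 : Fin 2), z) + wrap ((1 : Fin 2), z) ≤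
          B ((1 : Fin 2), z)
        have h1 := ub_left f hn 1 z hz0
        have hwv : wrap ((1 : Fin 2), z) = f (1, L) := by
          simp [hwrap, hzL, Prod.ext_iff]
        have hBv : B ((1 : Fin 2), z) = f (1, z) + f (1 + 1, z) + f (1, z + 1) + f (1, L) := by
          simp only [hB]
          rw [hzL']
        rw [hwv, hBv]
        omega
    · by_cases hjL : j = L
      · subst hjL
        fin_cases i
        · show nbhdSum (pathGraph 2 □ pathGraph n) f ((0 : Fin 2), L) + wrap ((0 : Fin 2), L) ≤
            B ((0 : Fin 2), L)
          have h1 := ub_right f hn 0 L hL0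
          have hwv : wrap ((0 : Fin 2), L) = f (0, z) := by
            simp [hwrap, hzL.symm, Prod.ext_iff]
          have hBv : B ((0 : Fin 2), L) = f (0, L) + f (0 + 1, L) + f (0, z) + f (0, L - 1) := by
            simp only [hB]
            rw [hLz]
          rw [hwv, hBv]
          omega
        · show nbhdSum (pathGraph 2 □ pathGraph n) f ((1 : Fin 2), L) + wrap ((1 : Fin 2), L) ≤
            B ((1 : Fin 2), L)
          have h1 := ub_right f hn 1 L hL0
          have hwv : wrap ((1 : Fin 2), L) = f (1, z) := by
            simp [hwrap, hzL.symm, Prod.ext_iff]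
          have hBv : B ((1 : Fin 2), L) = f (1, L) + f (1 + 1, L) + f (1, z) + f (1, L - 1) := by
            simp only [hB]
            rw [hLz]
          rw [hwv, hBv]
          omega
      · have hw : wrap (i, j) = 0 := by
          simp [hwrap, Prod.ext_iff, hjz, hjL]
        rw [hw, Nat.add_zero]
        exact ub_gen f hn (i, j)
  have hsumwrap : ∑ v : Fin 2 × Fin n, wrap v =
      f (0, L) + f (1, L) + f (0, z) + f (1, z) := by
    simp only [hwrap]
    rw [Finset.sum_add_distrib, Finset.sum_add_distrib, Finset.sum_add_distrib]
    rw [Finset.sum_ite_eq' Finset.univ ((0 : Fin 2), z) (fun _ => f (0, L)),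
        Finset.sum_ite_eq' Finset.univ ((1 : Fin 2), z) (fun _ => f (1, L)),
        Finset.sum_ite_eq' Finset.univ ((0 : Fin 2), L) (fun _ => f (0, z)),
        Finset.sum_ite_eq' Finset.univ ((1 : Fin 2), L) (fun _ => f (1, z))]
    simp
  have hcard : (Finset.univ : Finset (Fin 2 × Fin n)).card = 2 * n := by
    simp [Finset.card_univ]
  have hT1 : 2 * (2 * n) ≤ ∑ v : Fin 2 × Fin n, nbhdSum (pathGraph 2 □ pathGraph n) f v := by
    calc 2 * (2 * n) = ∑ _v : Fin 2 × Fin n, 2 := by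
          rw [Finset.sum_const, hcard]; ring
      _ ≤ _ := Finset.sum_le_sum (fun v _ => hf v)
  have hT2 : (∑ v : Fin 2 × Fin n, nbhdSum (pathGraph 2 □ pathGraph n) f v) +
      ∑ v : Fin 2 × Fin n, wrap v ≤ 4 * ∑ v, f v := by
    rw [← Finset.sum_add_distrib]
    calc ∑ v : Fin 2 × Fin n, (nbhdSum (pathGraph 2 □ pathGraph n) f v + wrap v)
        ≤ ∑ v : Fin 2 × Fin n, B v := Finset.sum_le_sum (fun v _ => key v)
      _ = 4 * ∑ v, f v := sumB f
  by_contra hcon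
  push_neg at hcon
  have hS : ∑ v, f v ≤ n := hcon
  have hwrap0 : ∑ v : Fin 2 × Fin n, wrap v = 0 := by omega
  have hTeq : ∑ v : Fin 2 × Fin n, nbhdSum (pathGraph 2 □ pathGraph n) f v = 2 * (2 * n) := by
    omega
  have hall : ∀ v : Fin 2 × Fin n, nbhdSum (pathGraph 2 □ pathGraph n) f v = 2 := by
    have h2 : ∑ _v : Fin 2 × Fin n, 2 =
        ∑ v : Fin 2 × Fin n, nbhdSum (pathGraph 2 □ pathGraph n) f v := by
      rw [Finset.sum_const, hcard, hTeq]; ring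
    have := (Finset.sum_eq_sum_iff_of_le (fun v _ => hf v)).1 h2
    intro v
    exact (this v (Finset.mem_univ v)).symm
  have hcorners : f (0, L) = 0 ∧ f (1, L) = 0 ∧ f (0, z) = 0 ∧ f (1, z) = 0 := by
    rw [hsumwrap] at hwrap0
    omega
  obtain ⟨hc1, hc2, hc3, hc4⟩ := hcorners
  have hul := ub_left f hn 0 z hz0
  have hul' := ub_left f hn 1 z hz0
  have hA : 2 ≤ f (0, z + 1) := by
    have h0 := hall ((0 : Fin 2), z)
    have h01 : ((0 : Fin 2)) + 1 = 1 := by decide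
    rw [h01] at hul
    omega
  have hB2 : 2 ≤ f (1, z + 1) := by
    have h0 := hall ((1 : Fin 2), z)
    have h11 : ((1 : Fin 2)) + 1 = 0 := by decide
    rw [h11] at hul'
    omega
  have hlow := lb_pair f (z + 1)
  have hfin := hall ((0 : Fin 2), z + 1)
  omega

theorem stmt_9 (k : ℕ) (hk : 0 < k) :
    2 * k < gamma2 (pathGraph 2 □ pathGraph (2 * k)) := by
  haveI : NeZero (2 * k) := ⟨by omega⟩
  have hn : 2 ≤ 2 * k := by omega
  have hdom : IsTwoDomFn (pathGraph 2 □ pathGraph (2 * k)) (fun _ => 2) := by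
    intro v
    rw [nbhdSum]
    refine le_trans ?_ (Finset.sum_le_sum_of_subset (s := ({v} : Finset (Fin 2 × Fin (2 * k)))) ?_)
    · simp
    · intro u hu
      simp only [Finset.mem_singleton] at hu
      subst hu
      simp
  have hne : {w | ∃ f, IsTwoDomFn (pathGraph 2 □ pathGraph (2 * k)) f ∧ w = ∑ v, f v}.Nonempty :=
    ⟨∑ _v : Fin 2 × Fin (2 * k), 2, fun _ => 2, hdom, rfl⟩
  have hmem := Nat.sInf_mem hne
  obtain ⟨f, hf, heq⟩ := hmem
  rw [gamma2, heq]
  exact main_bound hn f hf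
end

section
/- The function f on the vertices of the grid graph G_{3,n} (n a positive even integer) defined by f(i,j) = 1 if (i,j)=(2,1) or j is even, and f(i,j) = 0 otherwise, is an integer {2}-dominating function of G_{3,n}, and its total weight equals 3n/2 + 1. -/
open SimpleGraph Finset
open scoped Classical

lemma two_le_sum' {α : Type*} (s : Finset α) (f : α → ℕ) (a b : α)
    (ha : a ∈ s) (hb : b ∈ s) (hab : a ≠ b) (hfa : 1 ≤ f a) (hfb : 1 ≤ f b) :
    2 ≤ ∑ u ∈ s, f u := by
  classical
  calc 2 ≤ ∑ u ∈ ({a, b} : Finset α), f u := by rw [Finset.sum_pair hab]; omega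
    _ ≤ ∑ u ∈ s, f u := Finset.sum_le_sum_of_subset (by
        intro x hx
        simp only [Finset.mem_insert, Finset.mem_singleton] at hx
        rcases hx with rfl | rfl <;> assumption)

lemma oddcount (m : ℕ) :
    (∑ j ∈ Finset.range m, if (j + 1) % 2 = 0 then (1 : ℕ) else 0) = m / 2 := by
  induction m with
  | zero => simp
  | succ m ih =>
    rw [Finset.sum_range_succ, ih]
    by_cases h : (m + 1) % 2 = 0 <;> simp [h] <;> omega

theorem stmt_11 (n : ℕ) (hn : 0 < n) (hne : Even n) :
    IsTwoDomFn (pathGraph 3 □ pathGraph n)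
      (fun v => if (v.1.val = 1 ∧ v.2.val = 0) ∨ (v.2.val + 1) % 2 = 0 then 1 else 0) ∧
    (∑ v : Fin 3 × Fin n,
      if (v.1.val = 1 ∧ v.2.val = 0) ∨ (v.2.val + 1) % 2 = 0 then 1 else 0) = 3 * n / 2 + 1 := by
  have hn2 : 2 ≤ n := by
    obtain ⟨k, hk⟩ := hne; omega
  constructor
  · intro v
    obtain ⟨i, j⟩ := v
    unfold nbhdSum
    by_cases hj : (j.val + 1) % 2 = 0
    · -- j odd: witnesses (i,j) itself and vertical neighbor
      set i' : Fin 3 := ⟨if i.val = 0 then 1 else i.val - 1, by have := i.isLt; split <;> omega⟩ with hi'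
      refine two_le_sum' _ _ (i, j) (i', j) ?_ ?_ ?_ ?_ ?_
      · simp
      · simp only [Finset.mem_filter, Finset.mem_univ, true_and]
        left
        refine boxProd_adj.mpr (Or.inl ⟨pathGraph_adj.mpr ?_, rfl⟩)
        have h3 := i.isLt
        simp only [hi']
        by_cases h0 : i.val = 0 <;> simp [h0] <;> omega
      · intro h
        have := congrArg (fun p => (Prod.fst p).val) h
        simp only [hi'] at this
        have h3 := i.isLt
        by_cases h0 : i.val = 0 <;> simp [h0] at this <;> omega
      · simp [hj]
      · simp [hj]
    · -- j even
      have hje : j.val % 2 = 0 := by omega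
      by_cases h0 : j.val = 0
      · -- witnesses (i, 1) and (⟨1,_⟩, j)
        refine two_le_sum' _ _ (i, ⟨1, by omega⟩) (⟨1, by omega⟩, j) ?_ ?_ ?_ ?_ ?_
        · simp only [Finset.mem_filter, Finset.mem_univ, true_and]
          left
          exact boxProd_adj.mpr (Or.inr ⟨pathGraph_adj.mpr (Or.inl (by simp [h0])), rfl⟩)
        · simp only [Finset.mem_filter, Finset.mem_univ, true_and]
          by_cases hi1 : i.val = 1
          · right; exact Prod.ext (Fin.ext (by simp [hi1])) rfl
          · left
            refine boxProd_adj.mpr (Or.inl ⟨pathGraph_adj.mpr ?_, rfl⟩)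
            have h3 := i.isLt
            simp only []
            omega
        · intro h
          have := congrArg (fun p => (Prod.snd p).val) h
          simp [h0] at this
        · simp
        · simp [h0]
      · -- 0 < j : witnesses (i, j-1) and (i, j+1)
        have hjlt : j.val + 1 < n := by
          have := j.isLt
          obtain ⟨k, hk⟩ := hne
          omega
        refine two_le_sum' _ _ (i, ⟨j.val - 1, by have := j.isLt; omega⟩) (i, ⟨j.val + 1, hjlt⟩) ?_ ?_ ?_ ?_ ?_
        · simp only [Finset.mem_filter, Finset.mem_univ, true_and]
          left
          refine boxProd_adj.mpr (Or.inr ⟨pathGraph_adj.mpr (Or.inr ?_), rfl⟩)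
          simp only []
          omega
        · simp only [Finset.mem_filter, Finset.mem_univ, true_and]
          left
          exact boxProd_adj.mpr (Or.inr ⟨pathGraph_adj.mpr (Or.inl (by simp)), rfl⟩)
        · intro h
          have := congrArg (fun p => (Prod.snd p).val) h
          simp only [] at this
          omega
        · simp only []
          have : (j.val - 1 + 1) % 2 = 0 := by omega
          simp [this]
        · simp only []
          have : (j.val + 1 + 1) % 2 = 0 := by omega
          simp [this]
  · -- the weight computation
    have hsplit : ∀ v : Fin 3 × Fin n,
        (if (v.1.val = 1 ∧ v.2.val = 0) ∨ (v.2.val + 1) % 2 = 0 then (1 : ℕ) else 0)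
          = (if v.1.val = 1 ∧ v.2.val = 0 then 1 else 0)
            + (if (v.2.val + 1) % 2 = 0 then 1 else 0) := by
      intro v
      by_cases h1 : v.1.val = 1 ∧ v.2.val = 0 <;> by_cases h2 : (v.2.val + 1) % 2 = 0 <;>
        simp [h1, h2] <;> omega
    simp_rw [hsplit, Finset.sum_add_distrib]
    have hone : (∑ v : Fin 3 × Fin n,
        if v.1.val = 1 ∧ v.2.val = 0 then (1 : ℕ) else 0) = 1 := by
      have heq : ∀ v : Fin 3 × Fin n,
          (v.1.val = 1 ∧ v.2.val = 0) ↔ v = (⟨1, by omega⟩, ⟨0, hn⟩) := by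
        intro v
        constructor
        · rintro ⟨h1, h2⟩; exact Prod.ext (Fin.ext h1) (Fin.ext h2)
        · rintro rfl; exact ⟨rfl, rfl⟩
      simp_rw [heq]
      rw [Finset.sum_ite_eq' Finset.univ _ (fun _ => (1 : ℕ))]
      simp
    have htwo : (∑ v : Fin 3 × Fin n,
        if (v.2.val + 1) % 2 = 0 then (1 : ℕ) else 0) = 3 * (n / 2) := by
      rw [Fintype.sum_prod_type]
      have hin : (∑ j : Fin n,
          if (j.val + 1) % 2 = 0 then (1 : ℕ) else 0) = n / 2 := by
        rw [Fin.sum_univ_eq_sum_range (fun j => if (j + 1) % 2 = 0 then (1 : ℕ) else 0)]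
        exact oddcount n
      rw [Finset.sum_congr rfl (fun (i : Fin 3) _ => hin), Finset.sum_const,
        Finset.card_univ, Fintype.card_fin, smul_eq_mul]
    rw [hone, htwo]
    obtain ⟨k, hk⟩ := hne
    omega
end

section
/- The function f on the vertices of the grid graph G_{3,n} (n ≥ 3 odd) defined by f(i,j) = 1 if (i,j)=(2,1), or (i,j)=(2,n), or j is even, and f(i,j) = 0 otherwise, is an integer {2}-dominating function of G_{3,n}, and its total weight equals ⌊3n/2⌋ + 1. -/
open SimpleGraph Finset
open scoped Classical

lemma pair_le_s12 {V : Type*} (s : Finset V) (f : V → ℕ) {a b : V} (hab : a ≠ b)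
    (ha : a ∈ s) (hb : b ∈ s) (hfa : 1 ≤ f a) (hfb : 1 ≤ f b) : 2 ≤ ∑ x ∈ s, f x := by
  classical
  have hsub : ({a, b} : Finset V) ⊆ s := by
    intro x hx
    simp only [Finset.mem_insert, Finset.mem_singleton] at hx
    rcases hx with rfl | rfl <;> assumption
  calc 2 = 1 + 1 := rfl
    _ ≤ f a + f b := Nat.add_le_add hfa hfb
    _ = ∑ x ∈ ({a, b} : Finset V), f x := (Finset.sum_pair hab).symm
    _ ≤ ∑ x ∈ s, f x := Finset.sum_le_sum_of_subset hsub

lemma one_le_ite' {C : Prop} [Decidable C] (h : C) : 1 ≤ if C then (1 : ℕ) else 0 := by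
  simp [h]

lemma sumQ (m : ℕ) : (∑ k ∈ Finset.range m, if (k + 1) % 2 = 0 then 1 else 0) = m / 2 := by
  induction m with
  | zero => simp
  | succ m ih =>
    rw [Finset.sum_range_succ, ih]
    by_cases h : (m + 1) % 2 = 0 <;> simp [h] <;> omega

theorem stmt_12 (n : ℕ) (hn : 3 ≤ n) (hno : Odd n) :
    IsTwoDomFn (pathGraph 3 □ pathGraph n)
      (fun v => if (v.1.val = 1 ∧ (v.2.val = 0 ∨ v.2.val + 1 = n)) ∨ (v.2.val + 1) % 2 = 0
        then 1 else 0) ∧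
    (∑ v : Fin 3 × Fin n,
      if (v.1.val = 1 ∧ (v.2.val = 0 ∨ v.2.val + 1 = n)) ∨ (v.2.val + 1) % 2 = 0
        then 1 else 0) = 3 * n / 2 + 1 := by
  obtain ⟨m, hm⟩ := hno
  constructor
  · intro v
    obtain ⟨i, j⟩ := v
    unfold nbhdSum
    have h3 : i.val < 3 := i.isLt
    have hjn : j.val < n := j.isLt
    by_cases hj : j.val % 2 = 1
    · -- j odd: use v itself and a vertical neighbor
      refine pair_le_s12 _ _ (a := ((i, j) : Fin 3 × Fin n))
        (b := ((⟨if i.val = 1 then 0 else 1, by split <;> omega⟩, j) : Fin 3 × Fin n))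
        ?_ ?_ ?_ ?_ ?_
      · simp only [ne_eq, Prod.mk.injEq, Fin.ext_iff]
        split <;> omega
      · simp
      · simp only [Finset.mem_filter, Finset.mem_univ, true_and, boxProd_adj, pathGraph_adj,
          Prod.ext_iff, Fin.ext_iff, and_true]
        have h1 := i.isLt
        by_cases hcase : i.val = 1 <;> simp [hcase] <;> omega
      · exact one_le_ite' (Or.inr (show (j.val + 1) % 2 = 0 by omega))
      · exact one_le_ite' (Or.inr (show (j.val + 1) % 2 = 0 by omega))
    · have hje : j.val % 2 = 0 := by omega
      by_cases h0 : j.val = 0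
      · -- first column
        refine pair_le_s12 _ _ (a := ((i, ⟨1, by omega⟩) : Fin 3 × Fin n))
          (b := ((⟨1, by omega⟩, ⟨0, by omega⟩) : Fin 3 × Fin n)) ?_ ?_ ?_ ?_ ?_
        · simp only [ne_eq, Prod.mk.injEq, Fin.ext_iff]
          omega
        · simp only [Finset.mem_filter, Finset.mem_univ, true_and, boxProd_adj, pathGraph_adj,
            Prod.ext_iff, Fin.ext_iff, and_true]
          omega
        · simp only [Finset.mem_filter, Finset.mem_univ, true_and, boxProd_adj, pathGraph_adj,
            Prod.ext_iff, Fin.ext_iff, and_true]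
          omega
        · exact one_le_ite' (Or.inr (show (1 + 1) % 2 = 0 by omega))
        · exact one_le_ite' (Or.inl ⟨rfl, Or.inl rfl⟩)
      · by_cases hlast : j.val + 1 = n
        · -- last column (n odd so j even)
          refine pair_le_s12 _ _ (a := ((i, ⟨j.val - 1, by omega⟩) : Fin 3 × Fin n))
            (b := ((⟨1, by omega⟩, j) : Fin 3 × Fin n)) ?_ ?_ ?_ ?_ ?_
          · simp only [ne_eq, Prod.mk.injEq, Fin.ext_iff]
            omega
          · simp only [Finset.mem_filter, Finset.mem_univ, true_and, boxProd_adj, pathGraph_adj,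
              Prod.ext_iff, Fin.ext_iff, and_true]
            omega
          · simp only [Finset.mem_filter, Finset.mem_univ, true_and, boxProd_adj, pathGraph_adj,
              Prod.ext_iff, Fin.ext_iff, and_true]
            omega
          · exact one_le_ite' (Or.inr (show (j.val - 1 + 1) % 2 = 0 by omega))
          · exact one_le_ite' (Or.inl ⟨rfl, Or.inr hlast⟩)
        · -- interior even column: 0 < j < n - 1
          refine pair_le_s12 _ _ (a := ((i, ⟨j.val - 1, by omega⟩) : Fin 3 × Fin n))
            (b := ((i, ⟨j.val + 1, by omega⟩) : Fin 3 × Fin n)) ?_ ?_ ?_ ?_ ?_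
          · simp only [ne_eq, Prod.mk.injEq, Fin.ext_iff]
            omega
          · simp only [Finset.mem_filter, Finset.mem_univ, true_and, boxProd_adj, pathGraph_adj,
              Prod.ext_iff, Fin.ext_iff, and_true]
            omega
          · simp [Finset.mem_filter, boxProd_adj, pathGraph_adj]
          · exact one_le_ite' (Or.inr (show (j.val - 1 + 1) % 2 = 0 by omega))
          · exact one_le_ite' (Or.inr (show (j.val + 1 + 1) % 2 = 0 by omega))
  · rw [Fintype.sum_prod_type_right]
    have key : ∀ j : Fin n,
        (∑ i : Fin 3, if ((i : Fin 3).val = 1 ∧ (j.val = 0 ∨ j.val + 1 = n)) ∨ (j.val + 1) % 2 = 0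
          then 1 else 0) =
        3 * (if (j.val + 1) % 2 = 0 then 1 else 0)
          + (if j.val = 0 ∨ j.val + 1 = n then 1 else 0) := by
      intro j
      have hjlt := j.isLt
      rw [Fin.sum_univ_three]
      by_cases hq : (j.val + 1) % 2 = 0 <;>
        by_cases hp : j.val = 0 ∨ j.val + 1 = n <;>
          simp [hq, hp] <;> omega
    simp_rw [key]
    rw [Finset.sum_add_distrib, ← Finset.mul_sum]
    have h1 : (∑ j : Fin n, if (j.val + 1) % 2 = 0 then 1 else 0) = n / 2 := by
      rw [Fin.sum_univ_eq_sum_range (fun k => if (k + 1) % 2 = 0 then 1 else 0)]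
      exact sumQ n
    have h2 : (∑ j : Fin n, if j.val = 0 ∨ j.val + 1 = n then 1 else 0) = 2 := by
      rw [Fin.sum_univ_eq_sum_range (fun k => if k = 0 ∨ k + 1 = n then (1 : ℕ) else 0)]
      rw [← Finset.sum_filter]
      have hf : (Finset.range n).filter (fun k => k = 0 ∨ k + 1 = n) = {0, n - 1} := by
        ext k
        simp only [Finset.mem_filter, Finset.mem_range, Finset.mem_insert, Finset.mem_singleton]
        omega
      rw [hf]
      rw [Finset.sum_insert (by simp; omega), Finset.sum_singleton]
    rw [h1, h2]
    omega
end

section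
/- For odd n ≥ 1, the function f on the vertices of the grid graph G_{2,n} defined by f(i,j) = 1 if j is odd and f(i,j) = 0 if j is even, is an integer {2}-dominating function of G_{2,n} with total weight n+1. -/
open SimpleGraph Finset
open scoped Classical

lemma sum_range_even (k : ℕ) :
    (∑ j ∈ Finset.range (2 * k + 1), (if (j + 1) % 2 = 1 then 1 else 0)) = k + 1 := by
  induction k with
  | zero => decide
  | succ k ih =>
    have h1 : 2 * (k + 1) + 1 = (2 * k + 1) + 1 + 1 := by ring
    rw [h1, Finset.sum_range_succ, Finset.sum_range_succ, ih]
    have h2 : (2 * k + 1 + 1) % 2 = 0 := by omega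
    have h3 : (2 * k + 1 + 1 + 1) % 2 = 1 := by omega
    simp [h2, h3]

lemma two_le_of_pair {V : Type*} [Fintype V] (G : SimpleGraph V) (f : V → ℕ) (v u1 u2 : V)
    (hne : u1 ≠ u2) (h1 : G.Adj v u1 ∨ u1 = v) (h2 : G.Adj v u2 ∨ u2 = v)
    (hf1 : 1 ≤ f u1) (hf2 : 1 ≤ f u2) : 2 ≤ nbhdSum G f v := by
  have hsub : ({u1, u2} : Finset V) ⊆ Finset.univ.filter (fun u => G.Adj v u ∨ u = v) := by
    intro x hx
    simp only [Finset.mem_insert, Finset.mem_singleton] at hx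
    rcases hx with rfl | rfl <;> simp [h1, h2]
  calc 2 ≤ ∑ u ∈ ({u1, u2} : Finset V), f u := by
            rw [Finset.sum_pair hne]; omega
    _ ≤ _ := Finset.sum_le_sum_of_subset hsub

theorem stmt_13 (n : ℕ) (hn : 1 ≤ n) (hno : Odd n) :
    IsTwoDomFn (pathGraph 2 □ pathGraph n)
      (fun v => if (v.2.val + 1) % 2 = 1 then 1 else 0) ∧
    (∑ v : Fin 2 × Fin n, if (v.2.val + 1) % 2 = 1 then 1 else 0) = n + 1 := by
  obtain ⟨k, hk⟩ := hno
  constructor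
  · rintro ⟨i, j⟩
    rcases Nat.even_or_odd j.val with hje | hjo
    · -- j even: use v itself and the other row
      have hi2 : i.val < 2 := i.isLt
      set o : Fin 2 := ⟨1 - i.val, by omega⟩ with ho
      apply two_le_of_pair _ _ _ (i, j) (o, j)
      · intro h
        have := congrArg (fun p => (p.1 : Fin 2).val) h
        simp [ho] at this
        omega
      · right; rfl
      · left; left
        constructor
        · rw [pathGraph_adj]; simp [ho]; omega
        · rfl
      · obtain ⟨m, hm⟩ := hje
        simp only
        have : (j.val + 1) % 2 = 1 := by omega
        simp [this]
      · obtain ⟨m, hm⟩ := hje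
        simp only
        have : (j.val + 1) % 2 = 1 := by omega
        simp [this]
    · -- j odd: use left and right neighbors
      obtain ⟨m, hm⟩ := hjo
      have hjlt : j.val < n := j.isLt
      have hlt1 : j.val - 1 < n := by omega
      have hlt2 : j.val + 1 < n := by omega
      apply two_le_of_pair _ _ _ (i, ⟨j.val - 1, hlt1⟩) (i, ⟨j.val + 1, hlt2⟩)
      · intro h
        have := congrArg (fun p => (p.2 : Fin n).val) h
        simp only at this
        omega
      · left; right
        refine ⟨?_, rfl⟩
        rw [pathGraph_adj]; simp only [Fin.val_mk]; omega
      · left; right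
        refine ⟨?_, rfl⟩
        rw [pathGraph_adj]; simp
      · simp only
        have : (j.val - 1 + 1) % 2 = 1 := by omega
        simp [this]
      · simp only
        have : (j.val + 1 + 1) % 2 = 1 := by omega
        simp [this]
  · rw [Fintype.sum_prod_type]
    have hinner :
        (∑ j : Fin n, (if (j.val + 1) % 2 = 1 then 1 else 0)) = k + 1 := by
      rw [Fin.sum_univ_eq_sum_range (fun j => if (j + 1) % 2 = 1 then 1 else 0) n]
      rw [hk, sum_range_even]
    rw [Fin.sum_univ_two]
    simp only
    rw [hinner]
    omega
end

section
/- The integer {2}-domination number of the grid graph G_{4,4} = P_4 □ P_4 equals 8. -/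
open SimpleGraph Finset
open scoped Classical

/-- An explicit weight-8 `{2}`-dominating function on the 4×4 grid. -/
def myf : Fin 4 × Fin 4 → ℕ :=
  fun p => if p = (0,1) ∨ p = (1,3) ∨ p = (2,0) ∨ p = (3,2) then 2 else 0

lemma myf_dom : IsTwoDomFn (pathGraph 4 □ pathGraph 4) myf := by
  intro v
  fin_cases v <;>
    simp [nbhdSum, Finset.sum_filter, Fintype.sum_prod_type, Fin.sum_univ_four,
      SimpleGraph.boxProd_adj, SimpleGraph.pathGraph_adj, myf, Prod.ext_iff] <;> decide

lemma myf_sum : (∑ v, myf v) = 8 := by decide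

lemma lower_bound (f : Fin 4 × Fin 4 → ℕ)
    (hf : IsTwoDomFn (pathGraph 4 □ pathGraph 4) f) : 8 ≤ ∑ v, f v := by
  have h1 := hf (0,0)
  have h2 := hf (0,3)
  have h3 := hf (3,0)
  have h4 := hf (3,3)
  simp only [nbhdSum, Finset.sum_filter, Fintype.sum_prod_type, Fin.sum_univ_four,
    SimpleGraph.boxProd_adj, SimpleGraph.pathGraph_adj, Prod.ext_iff,
    (show ((3:Fin 4):ℕ) = 3 from rfl), (show ((2:Fin 4):ℕ) = 2 from rfl),
    (show ((1:Fin 4):ℕ) = 1 from rfl), (show ((0:Fin 4):ℕ) = 0 from rfl)] at h1 h2 h3 h4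
  norm_num at h1 h2 h3 h4
  simp at h1 h2 h3 h4
  have e0 : f 0 = f (0,0) := rfl
  have e1 : f 1 = f (1,1) := rfl
  simp only [Fintype.sum_prod_type, Fin.sum_univ_four]
  omega

set_option maxHeartbeats 1000000 in
theorem stmt_16 : gamma2 (pathGraph 4 □ pathGraph 4) = 8 := by
  have hmem : (8 : ℕ) ∈ {w | ∃ f, IsTwoDomFn (pathGraph 4 □ pathGraph 4) f ∧ w = ∑ v, f v} :=
    ⟨myf, myf_dom, myf_sum.symm⟩
  refine le_antisymm (Nat.sInf_le hmem) (le_csInf ⟨8, hmem⟩ ?_)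
  rintro w ⟨f, hf, rfl⟩
  exact lower_bound f hf
end
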